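/- Let f, g : {0,1}^n → ℝ with f ≥ 0 not identically zero, g symmetric, τ > ρ, g ∗ f ≥ τ f pointwise, and ĝ(S) ≤ ρ for |S| ≥ d. Define λ_i = (Σ_{|x|=i} f̂(x)^2)/⟨f,f⟩ for 0 ≤ i ≤ n, and let P(i) denote the common value ĝ(y) for |y| = i. Then (λ_0,…,λ_n) is a probability vector and Σ_{i=0}^n λ_i P(i) ≥ τ > ρ ≥ P(d). -/

import Mathlib

/-!
By Parseval, `∑ᵢ λᵢ = 1`. Since the Fourier transform turns convolution into multiplication,
Plancherel gives `⟨g ∗ f, f⟩ = ∑_S ĝ(S) f̂(S)² = ⟨f,f⟩ ∑ᵢ λᵢ P(i)`, while integrating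
`g ∗ f ≥ τ f` against `f ≥ 0` gives `⟨g ∗ f, f⟩ ≥ τ ⟨f,f⟩`. Finally `P(d) = ĝ(S) ≤ ρ` for any
`S` of weight `d`.
-/

open Finset

namespace Cube

attribute [local instance] Classical.propDecidable

/-- Hamming weight of a point of the Boolean cube. -/
def wt {n : ℕ} (x : Fin n → Bool) : ℕ := (univ.filter fun i => x i = true).card

/-- Hamming distance. -/
def hdist {n : ℕ} (x y : Fin n → Bool) : ℕ := (univ.filter fun i => x i ≠ y i).card

/-- Coordinatewise addition mod 2 (XOR). -/
def xadd {n : ℕ} (x y : Fin n → Bool) : Fin n → Bool := fun i => x i != y i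

/-- Walsh character `W_S(x) = (-1)^{⟨S,x⟩}`. -/
noncomputable def W {n : ℕ} (S x : Fin n → Bool) : ℝ :=
  (-1 : ℝ) ^ (univ.filter fun i => S i = true ∧ x i = true).card

/-- Fourier transform `f̂(S) = 2^{-n} ∑_x f(x) W_S(x)`. -/
noncomputable def ft {n : ℕ} (f : (Fin n → Bool) → ℝ) : (Fin n → Bool) → ℝ :=
  fun S => (∑ x, f x * W S x) / 2 ^ n

/-- Convolution `(f ∗ g)(x) = 2^{-n} ∑_y f(y) g(x+y)`. -/
noncomputable def conv {n : ℕ} (f g : (Fin n → Bool) → ℝ) : (Fin n → Bool) → ℝ :=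
  fun x => (∑ y, f y * g (xadd x y)) / 2 ^ n

/-- Normalized inner product `⟨f,g⟩ = 2^{-n} ∑_x f(x) g(x)`. -/
noncomputable def inp {n : ℕ} (f g : (Fin n → Bool) → ℝ) : ℝ := (∑ x, f x * g x) / 2 ^ n

/-- The all-zeros vector. -/
def zeroV (n : ℕ) : Fin n → Bool := fun _ => false

/-- Krawtchouk polynomial value `K_s(j)` (parameter `n`), at integer points. -/
noncomputable def kraw (n s j : ℕ) : ℝ :=
  ∑ k ∈ Finset.range (s + 1),
    (-1 : ℝ) ^ k * (j.choose k : ℝ) * ((n - j).choose (s - k) : ℝ)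

/-- Generalized binomial coefficient `C(x,k)` for real `x`. -/
noncomputable def rchoose (x : ℝ) (k : ℕ) : ℝ :=
  (∏ i ∈ Finset.range k, (x - i)) / (k.factorial : ℝ)

/-- Krawtchouk polynomial `K_m` (parameter `n`) as a function of a real variable. -/
noncomputable def krawR (n m : ℕ) (x : ℝ) : ℝ :=
  ∑ k ∈ Finset.range (m + 1),
    (-1 : ℝ) ^ k * rchoose x k * rchoose ((n : ℝ) - x) (m - k)

/-- Symmetrization operator: average over the Hamming sphere of the same weight. -/
noncomputable def symm {n : ℕ} (f : (Fin n → Bool) → ℝ) : (Fin n → Bool) → ℝ :=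
  fun x => (∑ y ∈ univ.filter (fun y => wt y = wt x), f y) /
    ((univ.filter (fun y : Fin n → Bool => wt y = wt x)).card : ℝ)

/-- Binary entropy function. -/
noncomputable def binH (x : ℝ) : ℝ :=
  x * Real.logb 2 (1 / x) + (1 - x) * Real.logb 2 (1 / (1 - x))

lemma W_eq_prod {n : ℕ} (S x : Fin n → Bool) :
    W S x = ∏ i, if S i = true ∧ x i = true then (-1 : ℝ) else 1 := by
  rw [W, ← prod_const, prod_filter]

lemma W_mul_W {n : ℕ} (S x y : Fin n → Bool) : W S x * W S y = W S (xadd x y) := by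
  simp only [W_eq_prod, ← prod_mul_distrib]
  refine prod_congr rfl fun i _ => ?_
  cases S i <;> cases hx : x i <;> cases hy : y i <;> simp [xadd, hx, hy]

lemma xadd_xadd {n : ℕ} (x y : Fin n → Bool) : xadd (xadd x y) y = x := by
  funext i
  cases hx : x i <;> cases hy : y i <;> simp [xadd, hx, hy]

/-- The sum over `S` factors as `∏ i, ∑ b : Bool, …`, whose `i`-th factor is `2` if `x i = y i`
and `0` otherwise. -/
lemma sum_W_mul_W {n : ℕ} (x y : Fin n → Bool) :
    ∑ S, W S x * W S y = if x = y then (2 : ℝ) ^ n else 0 := by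
  let c : Fin n → Bool → Bool → ℝ := fun i b a => if b = true ∧ a = true then -1 else 1
  have hfactor : ∀ i, ∑ b, c i b (x i) * c i b (y i) = if x i = y i then 2 else 0 := by
    intro i
    simp only [c, Fintype.sum_bool]
    cases x i <;> cases y i <;> norm_num
  calc ∑ S, W S x * W S y = ∑ S : Fin n → Bool, ∏ i, c i (S i) (x i) * c i (S i) (y i) := by
        simp only [W_eq_prod, ← prod_mul_distrib, c]
    _ = ∏ i, ∑ b, c i b (x i) * c i b (y i) := by
        rw [Fintype.prod_sum]
    _ = if x = y then (2 : ℝ) ^ n else 0 := by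
        simp only [hfactor, Fintype.prod_ite_zero, prod_const, card_univ, Fintype.card_fin,
          funext_iff]

lemma sum_ft_mul_ft {n : ℕ} (u v : (Fin n → Bool) → ℝ) :
    ∑ S, ft u S * ft v S = inp u v := by
  have hexpand : ∀ S, ft u S * ft v S =
      (∑ x, ∑ y, u x * v y * (W S x * W S y)) / (2 ^ n * 2 ^ n) := by
    intro S
    rw [ft, ft, div_mul_div_comm, sum_mul_sum]
    simp only [mul_mul_mul_comm]
  calc ∑ S, ft u S * ft v S
      = (∑ S, ∑ x, ∑ y, u x * v y * (W S x * W S y)) / (2 ^ n * 2 ^ n) := by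
        rw [sum_div]
        exact sum_congr rfl fun S _ => hexpand S
    _ = (∑ x, ∑ y, u x * v y * ∑ S, W S x * W S y) / (2 ^ n * 2 ^ n) := by
        simp only [mul_sum]
        rw [sum_comm]
        exact congrArg (· / _) (sum_congr rfl fun x _ => sum_comm)
    _ = (∑ x, u x * v x * 2 ^ n) / (2 ^ n * 2 ^ n) := by
        simp only [sum_W_mul_W, mul_ite, mul_zero, sum_ite_eq, mem_univ, if_true]
    _ = inp u v := by
        rw [inp, ← sum_mul]
        field_simp

lemma ft_conv {n : ℕ} (g f : (Fin n → Bool) → ℝ) (S : Fin n → Bool) :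
    ft (conv g f) S = ft g S * ft f S := by
  have hshift : ∀ y, ∑ x, f (xadd x y) * W S x = (∑ z, f z * W S z) * W S y := by
    intro y
    have hinv : Function.Involutive fun z => xadd z y := fun z => xadd_xadd z y
    rw [sum_mul, ← hinv.bijective.sum_comp fun x => f (xadd x y) * W S x]
    refine sum_congr rfl fun z _ => ?_
    rw [xadd_xadd, ← W_mul_W]
    ring
  calc ft (conv g f) S = (∑ x, ∑ y, g y * f (xadd x y) * W S x) / 2 ^ n / 2 ^ n := by
        simp only [ft, conv, div_mul_eq_mul_div, ← sum_div, sum_mul]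
    _ = (∑ y, g y * ((∑ z, f z * W S z) * W S y)) / 2 ^ n / 2 ^ n := by
        rw [sum_comm]
        simp only [mul_assoc, ← mul_sum, hshift]
    _ = ft g S * ft f S := by
        rw [ft, ft, div_div, div_mul_div_comm, sum_mul]
        exact congrArg (· / _) (sum_congr rfl fun y _ => by ring)

lemma wt_le {n : ℕ} (x : Fin n → Bool) : wt x ≤ n :=
  (card_filter_le _ _).trans_eq (card_fin n)

lemma exists_wt_eq {n d : ℕ} (hd : d ≤ n) : ∃ S : Fin n → Bool, wt S = d := by
  refine ⟨fun i => decide ((i : ℕ) < d), ?_⟩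
  simp only [wt, decide_eq_true_eq]
  convert Fin.card_filter_val_lt (n := n) (m := d)
  omega

lemma sum_univ_eq_sum_range_wt {n : ℕ} (F : (Fin n → Bool) → ℝ) :
    ∑ x, F x = ∑ i ∈ range (n + 1), ∑ x ∈ univ.filter (fun x => wt x = i), F x :=
  (sum_fiberwise_of_maps_to (fun x _ => mem_range.mpr (Nat.lt_succ_of_le (wt_le x))) F).symm

/-- The numerator `⟨f,f⟩ λᵢ` of `λᵢ`. -/
noncomputable def levelEnergy {n : ℕ} (f : (Fin n → Bool) → ℝ) (i : ℕ) : ℝ :=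
  ∑ x ∈ univ.filter (fun x : Fin n → Bool => wt x = i), ft f x ^ 2

lemma levelEnergy_nonneg {n : ℕ} (f : (Fin n → Bool) → ℝ) (i : ℕ) : 0 ≤ levelEnergy f i :=
  sum_nonneg fun x _ => sq_nonneg (ft f x)

lemma sum_levelEnergy {n : ℕ} (f : (Fin n → Bool) → ℝ) :
    ∑ i ∈ range (n + 1), levelEnergy f i = inp f f := by
  rw [← sum_ft_mul_ft, sum_univ_eq_sum_range_wt]
  simp only [levelEnergy, sq]

lemma inp_conv_eq_sum_levelEnergy {n : ℕ} {f g : (Fin n → Bool) → ℝ} {P : ℕ → ℝ}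
    (hP : ∀ y, ft g y = P (wt y)) :
    inp (conv g f) f = ∑ i ∈ range (n + 1), P i * levelEnergy f i := by
  rw [← sum_ft_mul_ft, sum_univ_eq_sum_range_wt]
  refine sum_congr rfl fun i _ => ?_
  rw [levelEnergy, mul_sum]
  refine sum_congr rfl fun x hx => ?_
  rw [ft_conv, hP, (mem_filter.mp hx).2]
  ring

lemma inp_self_pos {n : ℕ} {f : (Fin n → Bool) → ℝ} (hf : f ≠ 0) : 0 < inp f f := by
  obtain ⟨x, hx⟩ := Function.ne_iff.mp hf
  exact div_pos (sum_pos' (fun y _ => mul_self_nonneg (f y))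
    ⟨x, mem_univ x, mul_self_pos.mpr hx⟩) (by positivity)

lemma inp_const_mul_left {n : ℕ} (c : ℝ) (u v : (Fin n → Bool) → ℝ) :
    inp (fun x => c * u x) v = c * inp u v := by
  simp only [inp, mul_assoc, ← mul_sum, mul_div_assoc]

lemma inp_le_inp_of_le {n : ℕ} {u u' w : (Fin n → Bool) → ℝ} (hu : ∀ x, u x ≤ u' x)
    (hw : ∀ x, 0 ≤ w x) : inp u w ≤ inp u' w :=
  div_le_div_of_nonneg_right (sum_le_sum fun x _ => mul_le_mul_of_nonneg_right (hu x) (hw x))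
    (by positivity)

theorem probability_vector_and_expectation_general (n d : ℕ) (hd : d ≤ n)
    (f g : (Fin n → Bool) → ℝ) (τ ρ : ℝ) (lam P : ℕ → ℝ)
    (hf : ∀ x, 0 ≤ f x) (hf_ne : f ≠ 0)
    (hτρ : ρ < τ)
    (h1 : ∀ x, τ * f x ≤ conv g f x)
    (h2 : ∀ S : Fin n → Bool, d ≤ wt S → ft g S ≤ ρ)
    (hlam : ∀ i, lam i =
      (∑ x ∈ univ.filter (fun x : Fin n → Bool => wt x = i), (ft f x) ^ 2) / inp f f)
    (hP : ∀ y : Fin n → Bool, ft g y = P (wt y)) :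
    (∀ i, 0 ≤ lam i) ∧ (∑ i ∈ Finset.range (n + 1), lam i) = 1 ∧
    P d ≤ ρ ∧ ρ < τ ∧ τ ≤ ∑ i ∈ Finset.range (n + 1), lam i * P i := by
  have hpos := inp_self_pos hf_ne
  have hlam' : ∀ i, lam i = levelEnergy f i / inp f f := hlam
  refine ⟨fun i => ?_, ?_, ?_, hτρ, ?_⟩
  · rw [hlam']
    exact div_nonneg (levelEnergy_nonneg f i) hpos.le
  · rw [sum_congr rfl fun i _ => hlam' i, ← sum_div, sum_levelEnergy, div_self hpos.ne']
  · obtain ⟨S, hS⟩ := exists_wt_eq hd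
    simpa only [hP, hS] using h2 S hS.ge
  · have hmain : τ * inp f f ≤ ∑ i ∈ range (n + 1), P i * levelEnergy f i :=
      calc τ * inp f f = inp (fun x => τ * f x) f := (inp_const_mul_left τ f f).symm
        _ ≤ inp (conv g f) f := inp_le_inp_of_le h1 hf
        _ = _ := inp_conv_eq_sum_levelEnergy hP
    simp only [hlam', div_mul_eq_mul_div, ← sum_div, le_div_iff₀ hpos, mul_comm (levelEnergy f _)]
    exact hmain

theorem probability_vector_and_expectation (n d : ℕ) (hd : d ≤ n)
    (f g : (Fin n → Bool) → ℝ) (τ ρ : ℝ) (lam P : ℕ → ℝ)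
    (hf : ∀ x, 0 ≤ f x) (hf_ne : f ≠ 0)
    (hgsym : ∀ x y : Fin n → Bool, wt x = wt y → g x = g y)
    (hτρ : ρ < τ)
    (h1 : ∀ x, τ * f x ≤ conv g f x)
    (h2 : ∀ S : Fin n → Bool, d ≤ wt S → ft g S ≤ ρ)
    (hlam : ∀ i, lam i =
      (∑ x ∈ univ.filter (fun x : Fin n → Bool => wt x = i), (ft f x) ^ 2) / inp f f)
    (hP : ∀ y : Fin n → Bool, ft g y = P (wt y)) :
    (∀ i, 0 ≤ lam i) ∧ (∑ i ∈ Finset.range (n + 1), lam i) = 1 ∧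
    P d ≤ ρ ∧ ρ < τ ∧ τ ≤ ∑ i ∈ Finset.range (n + 1), lam i * P i :=
  probability_vector_and_expectation_general n d hd f g τ ρ lam P hf hf_ne hτρ h1 h2 hlam hP

end Cube
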